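/- arXiv:1909.04982 — 8 statements merged into one kernel-verified Lean document; each statement's English description precedes it below -/
import Mathlib

section
/- Every positive integer n with n ≡ 4 (mod 5) that can be written as a sum of three squares of integers can also be written as a sum of three nonunit squares, except for n = 14 and n = 19. That is, if n ≡ 4 (mod 5), n = a² + b² + c² for some integers a, b, c, and n ∉ {14, 19}, then there exist integers x, y, z with n = x² + y² + z² and x² ≠ 1, y² ≠ 1, z² ≠ 1. -/
/-!
Squares are `0, 1, 4` modulo 5, so a representation `n = a² + b² + c²` with `n ≡ 4 (mod 5)` that
uses a unit square is `n = 1 + b² + c²` with `b ≡ c ≡ ±2 (mod 5)`. For `b = 5k + 3` the identity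
`1 + (5k + 3)² = (4k + 3)² + (3k + 1)²` trades `1 + b²` for two nonunit squares unless `b² ∈ {4, 9}`;
if both `b²` and `c²` lie in `{4, 9}`, then `n ∈ {9, 14, 19}` and `9 = 3² + 0² + 0²`.
-/

def IsSumOfThreeNonunitSquares (m : ℤ) : Prop :=
  ∃ x y z : ℤ, m = x ^ 2 + y ^ 2 + z ^ 2 ∧ x ^ 2 ≠ 1 ∧ y ^ 2 ≠ 1 ∧ z ^ 2 ≠ 1

lemma ZMod.five_eq_two_or_three_of_sq_add_sq_eq_three :
    ∀ β γ : ZMod 5, β ^ 2 + γ ^ 2 = 3 → (β = 2 ∨ β = 3) ∧ (γ = 2 ∨ γ = 3) := by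
  decide

lemma Int.sq_ne_one_of_intCast_zmod_five_eq_two_or_three {b : ℤ}
    (hb : (b : ZMod 5) = 2 ∨ (b : ZMod 5) = 3) : b ^ 2 ≠ 1 := by
  intro h
  rcases sq_eq_one_iff.1 h with rfl | rfl <;> revert hb <;> decide

lemma exists_nonunit_sq_add_sq_eq_one_add_five_mul_add_three_sq {k : ℤ} (hk : k ≠ -1)
    (hk₀ : k ≠ 0) :
    ∃ x y : ℤ, 1 + (5 * k + 3) ^ 2 = x ^ 2 + y ^ 2 ∧ x ^ 2 ≠ 1 ∧ y ^ 2 ≠ 1 := by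
  refine ⟨4 * k + 3, 3 * k + 1, by ring, fun h ↦ ?_, fun h ↦ ?_⟩
  · rcases sq_eq_one_iff.1 h with h | h <;> omega
  · rcases sq_eq_one_iff.1 h with h | h <;> omega

lemma exists_nonunit_sq_add_sq_eq_one_add_sq {b : ℤ}
    (hb : (b : ZMod 5) = 2 ∨ (b : ZMod 5) = 3) (hb₄ : b ^ 2 ≠ 4) (hb₉ : b ^ 2 ≠ 9) :
    ∃ x y : ℤ, 1 + b ^ 2 = x ^ 2 + y ^ 2 ∧ x ^ 2 ≠ 1 ∧ y ^ 2 ≠ 1 := by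
  obtain ⟨b', hb', hsq⟩ : ∃ b' : ℤ, (b' : ZMod 5) = (3 : ℤ) ∧ b ^ 2 = b' ^ 2 := by
    rcases hb with hb | hb
    · exact ⟨-b, by push_cast; rw [hb]; decide, (neg_sq b).symm⟩
    · exact ⟨b, by simpa using hb, rfl⟩
  have : b' % 5 = 3 := (ZMod.intCast_eq_intCast_iff' b' 3 5).1 hb'
  obtain ⟨k, rfl⟩ : ∃ k : ℤ, b' = 5 * k + 3 := ⟨b' / 5, by omega⟩
  rw [hsq] at hb₄ hb₉ ⊢
  exact exists_nonunit_sq_add_sq_eq_one_add_five_mul_add_three_sq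
    (by rintro rfl; norm_num at hb₄) (by rintro rfl; norm_num at hb₉)

lemma isSumOfThreeNonunitSquares_of_eq_one_add_sq_add_sq {m b c : ℤ}
    (h : m = 1 + b ^ 2 + c ^ 2) (h5 : (m : ZMod 5) = 4) (h14 : m ≠ 14) (h19 : m ≠ 19) :
    IsSumOfThreeNonunitSquares m := by
  have hbc : (b : ZMod 5) ^ 2 + (c : ZMod 5) ^ 2 = 3 := by
    subst h
    push_cast at h5
    linear_combination h5
  obtain ⟨hb, hc⟩ := ZMod.five_eq_two_or_three_of_sq_add_sq_eq_three _ _ hbc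
  by_cases hb49 : b ^ 2 = 4 ∨ b ^ 2 = 9
  · by_cases hc49 : c ^ 2 = 4 ∨ c ^ 2 = 9
    · have hm : m = 9 := by
        rcases hb49 with hb' | hb' <;> rcases hc49 with hc' | hc' <;> rw [hb', hc'] at h <;> omega
      exact ⟨3, 0, 0, by rw [hm]; norm_num, by norm_num, by norm_num, by norm_num⟩
    · push Not at hc49
      obtain ⟨x, y, hxy, hx, hy⟩ := exists_nonunit_sq_add_sq_eq_one_add_sq hc hc49.1 hc49.2
      exact ⟨x, y, b, by rw [h]; linear_combination hxy, hx, hy, by omega⟩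
  · push Not at hb49
    obtain ⟨x, y, hxy, hx, hy⟩ := exists_nonunit_sq_add_sq_eq_one_add_sq hb hb49.1 hb49.2
    exact ⟨x, y, c, by rw [h]; linear_combination hxy, hx, hy,
      Int.sq_ne_one_of_intCast_zmod_five_eq_two_or_three hc⟩

theorem stmt_1_general (n : ℕ) (h5 : n % 5 = 4)
    (hS3 : ∃ a b c : ℤ, (n : ℤ) = a ^ 2 + b ^ 2 + c ^ 2)
    (h14 : n ≠ 14) (h19 : n ≠ 19) :
    ∃ x y z : ℤ, (n : ℤ) = x ^ 2 + y ^ 2 + z ^ 2 ∧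
      x ^ 2 ≠ 1 ∧ y ^ 2 ≠ 1 ∧ z ^ 2 ≠ 1 := by
  obtain ⟨a, b, c, h⟩ := hS3
  have hn5 : ((n : ℤ) : ZMod 5) = 4 := by
    rw [Int.cast_natCast, ← ZMod.natCast_mod, h5]
    rfl
  have h14' : (n : ℤ) ≠ 14 := by omega
  have h19' : (n : ℤ) ≠ 19 := by omega
  by_cases ha : a ^ 2 = 1
  · exact isSumOfThreeNonunitSquares_of_eq_one_add_sq_add_sq (b := b) (c := c)
      (by rw [h, ha]) hn5 h14' h19'
  by_cases hb : b ^ 2 = 1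
  · exact isSumOfThreeNonunitSquares_of_eq_one_add_sq_add_sq (b := a) (c := c)
      (by rw [h, hb]; ring) hn5 h14' h19'
  by_cases hc : c ^ 2 = 1
  · exact isSumOfThreeNonunitSquares_of_eq_one_add_sq_add_sq (b := a) (c := b)
      (by rw [h, hc]; ring) hn5 h14' h19'
  exact ⟨a, b, c, h, ha, hb, hc⟩

/-- Any `n ∈ 𝒮₃` with `n ≡ 4 (mod 5)` is a sum of three nonunit squares, except `14`, `19`. -/
theorem stmt_1 (n : ℕ) (hn : 0 < n) (h5 : n % 5 = 4)
    (hS3 : ∃ a b c : ℤ, (n : ℤ) = a ^ 2 + b ^ 2 + c ^ 2)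
    (h14 : n ≠ 14) (h19 : n ≠ 19) :
    ∃ x y z : ℤ, (n : ℤ) = x ^ 2 + y ^ 2 + z ^ 2 ∧
      x ^ 2 ≠ 1 ∧ y ^ 2 ≠ 1 ∧ z ^ 2 ≠ 1 :=
  stmt_1_general n h5 hS3 h14 h19
end

section
/- Let x be an integer with x ≡ 2 (mod 5) or x ≡ 3 (mod 5). If x ∉ {2, −2, 3, −3}, then x² + 1 can be written as a sum of two nonunit squares, i.e., there exist integers u, v with x² + 1 = u² + v², u² ≠ 1, and v² ≠ 1. -/
/-!
Write `x = 5k + 2`. In `ℤ[i]`, `x + i = (2 + i) w` with `w = 2k + 1 - k i`, and replacing `w` by its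
conjugate gives a second representation `x² + 1 = (4k + 1)² + (3k + 2)²`. Its squares equal `1`
only for `k = 0` and `k = -1`, i.e. `x = 2` and `x = -3`. The case `x ≡ 3 (mod 5)` reduces to this
one by `x ↦ -x`.
-/

def IsSumOfTwoNonunitSquares (n : ℤ) : Prop :=
  ∃ u v : ℤ, n = u ^ 2 + v ^ 2 ∧ u ^ 2 ≠ 1 ∧ v ^ 2 ≠ 1

theorem five_mul_add_two_sq_add_one (k : ℤ) :
    (5 * k + 2) ^ 2 + 1 = (4 * k + 1) ^ 2 + (3 * k + 2) ^ 2 := by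
  ring

theorem isSumOfTwoNonunitSquares_sq_add_one_of_emod_five_eq_two {x : ℤ} (h5 : x % 5 = 2)
    (hx2 : x ≠ 2) (hx3 : x ≠ -3) : IsSumOfTwoNonunitSquares (x ^ 2 + 1) := by
  obtain ⟨k, rfl⟩ : ∃ k, x = 5 * k + 2 := ⟨x / 5, by omega⟩
  refine ⟨4 * k + 1, 3 * k + 2, five_mul_add_two_sq_add_one k, ?_, ?_⟩ <;>
    · rw [Ne, sq_eq_one_iff]
      omega

/-- If `x ≡ ±2 (mod 5)` and `x ∉ {2, −2, 3, −3}`, then `x² + 1` is a sum of two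
nonunit squares. -/
theorem stmt_2 (x : ℤ) (h5 : x % 5 = 2 ∨ x % 5 = 3)
    (hx : x ∉ ({2, -2, 3, -3} : Set ℤ)) :
    ∃ u v : ℤ, x ^ 2 + 1 = u ^ 2 + v ^ 2 ∧ u ^ 2 ≠ 1 ∧ v ^ 2 ≠ 1 := by
  simp only [Set.mem_insert_iff, Set.mem_singleton_iff, not_or] at hx
  obtain ⟨hx2, hxm2, hx3, hxm3⟩ := hx
  rcases h5 with h5 | h5
  · exact isSumOfTwoNonunitSquares_sq_add_one_of_emod_five_eq_two h5 hx2 hxm3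
  · rw [← neg_sq]
    exact isSumOfTwoNonunitSquares_sq_add_one_of_emod_five_eq_two (by omega) (by omega) (by omega)
end

section
/- For positive integers n and y, the following hold: (i) 5ⁿ = 1 + y² if and only if (n, y) = (1, 2); (ii) 5ⁿ = 4 + y² if and only if (n, y) = (1, 1) or (3, 11); (iii) 5ⁿ = 9 + y² if and only if (n, y) = (2, 4); (iv) 2·5ⁿ = 1 + y² if and only if (n, y) = (1, 3) or (2, 7); (v) 2·5ⁿ = 4 + y² has no solutions; (vi) 2·5ⁿ = 9 + y² if and only if (n, y) = (1, 1) or (5, 79). -/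
/-!
Up to conjugation, a Gaussian integer `y + c i` with coprime parts and norm `k·5ⁿ` equals `γ ϖⁿ`
with `ϖ = 2 + i` and `N γ = k`: divide by `ϖ` or `ϖ̄` one factor at a time; since `ϖ ϖ̄ = 5`, a
primitive element is never divisible by both. Parts (i), (ii), (iv) and (vi) thus ask when the real
or imaginary part of `ϖⁿ` or `(1 + i) ϖⁿ` is `±c` for `c ∈ {1, 2, 3}`. Since `ϖ⁸ = 1 + 2⁴ z` and
`ϖ¹⁶ = 1 + 2⁵ z'`, write `n = r + P q` and expand `(1 + 2ˢ z)^q` binomially: modulo a suitable power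
of 2 the part does not depend on `q`, which excludes most residues `r`; in the remaining ones the
linear term of the expansion has smaller 2-adic valuation than all later terms, so the value at
`q = 0` is never taken again. Parts (iii) and (v) reduce to congruences modulo 3 and 4 and, for
even `n` in (iii), a size bound.
-/

open Finset

theorem Nat.dvd_choose_mul {d m j : ℕ} (hm : d ∣ m) (hj : j ≠ 0) : d ∣ m.choose j * j := by
  obtain ⟨J, rfl⟩ := Nat.exists_eq_add_one_of_ne_zero hj
  rcases m with _ | M
  · simp
  · exact add_one_mul_choose_eq M J ▸ hm.mul_right _

theorem Nat.pow_dvd_choose_mul_pow {p k m s j : ℕ} (hp : p.Prime) (hm : p ^ k ∣ m) (hs : 1 ≤ s)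
    (hj : 2 ≤ j) : p ^ (k + 2 * s - 1) ∣ m.choose j * p ^ (s * j) := by
  -- `p ^ (k - v) ∣ m.choose j` where `v < j` is the `p`-adic valuation of `j`
  obtain ⟨v, j', hj', hjv⟩ := Nat.exists_eq_pow_mul_and_not_dvd (by omega : j ≠ 0) p hp.ne_one
  have hv : v + 1 ≤ j := hjv ▸ (Nat.lt_pow_self hp.one_lt).trans_le
    (Nat.le_mul_of_pos_right _ (Nat.pos_of_ne_zero (by rintro rfl; simp at hj')))
  have hC : p ^ (k - v) ∣ m.choose j := by
    have h := Nat.dvd_choose_mul hm (by omega : j ≠ 0)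
    rw [show m.choose j * j = m.choose j * j' * p ^ v by rw [hjv]; ring] at h
    refine (Nat.Coprime.pow_left _ ((hp.coprime_iff_not_dvd).2 hj')).dvd_of_dvd_mul_right ?_
    rcases le_or_gt k v with hkv | hkv
    · simp [Nat.sub_eq_zero_of_le hkv]
    · rw [← Nat.sub_add_cancel hkv.le, pow_add] at h
      exact Nat.dvd_of_mul_dvd_mul_right (pow_pos hp.pos v) h
  have : 2 * s + j ≤ s * j + 2 := by nlinarith
  calc p ^ (k + 2 * s - 1) ∣ p ^ (k - v) * p ^ (s * j) := by
        rw [← pow_add]; exact pow_dvd_pow _ (by omega)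
    _ ∣ _ := mul_dvd_mul_right hC _

theorem pow_dvd_one_add_pow_sub {R : Type*} [CommRing R] {p k s m : ℕ} (hp : p.Prime) (hs : 1 ≤ s)
    (hm : p ^ k ∣ m) (z : R) :
    (p : R) ^ (k + 2 * s - 1) ∣ (1 + p ^ s * z) ^ m - (1 + m * p ^ s * z) := by
  rcases m with _ | M
  · simp
  rw [add_comm 1, add_pow, sum_range_succ', sum_range_succ']
  suffices h : (p : R) ^ (k + 2 * s - 1) ∣ ∑ i ∈ range M,
      (p ^ s * z) ^ (i + 1 + 1) * 1 ^ (M + 1 - (i + 1 + 1)) * ((M + 1).choose (i + 1 + 1) : ℕ) by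
    convert h using 1
    simp only [zero_add, Nat.choose_zero_right, Nat.choose_one_right]
    push_cast
    ring
  refine dvd_sum fun i _ => ?_
  have h := Nat.cast_dvd_cast (α := R) (Nat.pow_dvd_choose_mul_pow hp hm hs (j := i + 2) (by omega))
  push_cast at h
  convert h.mul_right (z ^ (i + 2)) using 1
  ring

namespace AddMonoidHom

variable {R : Type*} [CommRing R] (L : R →+ ℤ) {p s : ℕ}

theorem map_mul_one_add_pow_modEq (hp : p.Prime) (hs : 1 ≤ s) {k m : ℕ} (hm : p ^ k ∣ m)
    (w z : R) :
    L (w * (1 + p ^ s * z) ^ m) ≡ L w + m * p ^ s * L (w * z) [ZMOD p ^ (k + 2 * s - 1)] := by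
  obtain ⟨Q, hQ⟩ := pow_dvd_one_add_pow_sub hp hs hm z
  have hL (n : ℕ) (x : R) : L (n * x) = n * L x := by
    rw [← nsmul_eq_mul, map_nsmul, nsmul_eq_mul]
  have hX : w * (1 + p ^ s * z) ^ m =
      w + ((m * p ^ s : ℕ) : R) * (w * z) + ((p ^ (k + 2 * s - 1) : ℕ) : R) * (w * Q) := by
    rw [sub_eq_iff_eq_add'.1 hQ]; push_cast; ring
  rw [hX, map_add, map_add, hL, hL]
  push_cast
  simp [Int.ModEq, Int.add_mul_emod_self_left, mul_assoc]

theorem map_mul_one_add_pow_modEq_gcd (hp : p.Prime) (hs : 1 ≤ s) (m : ℕ) (w z : R) :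
    L (w * (1 + p ^ s * z) ^ m) ≡ L w
      [ZMOD Int.gcd (p ^ (2 * s - 1)) (p ^ s * L (w * z))] := by
  have h := map_mul_one_add_pow_modEq L hp hs (k := 0) (by simp) w z (m := m)
  rw [zero_add] at h
  refine (h.of_dvd (Int.gcd_dvd_left _ _)).trans (Int.modEq_iff_dvd.2 ?_)
  simpa [mul_assoc] using (Int.gcd_dvd_right (p ^ (2 * s - 1) : ℤ) _).mul_left (m : ℤ)

theorem map_mul_one_add_pow_ne (hp : p.Prime) (hs : 1 ≤ s) {w z : R}
    (hb : ¬ (p : ℤ) ^ (s - 1) ∣ L (w * z)) {m : ℕ} (hm : m ≠ 0) :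
    L (w * (1 + p ^ s * z) ^ m) ≠ L w := by
  obtain ⟨k, m', hm', rfl⟩ := Nat.exists_eq_pow_mul_and_not_dvd hm p hp.ne_one
  intro h
  have hdvd := Int.modEq_iff_dvd.1
    (h ▸ map_mul_one_add_pow_modEq L hp hs (k := k) (dvd_mul_right _ m') w z)
  rw [add_sub_cancel_left, show k + 2 * s - 1 = k + s + (s - 1) by omega, pow_add,
    show ((p ^ k * m' : ℕ) : ℤ) * p ^ s * L (w * z) = p ^ (k + s) * (m' * L (w * z)) by
      push_cast; ring] at hdvd
  have hcop : IsCoprime ((p : ℤ) ^ (s - 1)) m' := by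
    exact_mod_cast Nat.isCoprime_iff_coprime.2
      (Nat.Coprime.pow_left _ ((hp.coprime_iff_not_dvd).2 hm'))
  exact hb (hcop.dvd_of_dvd_mul_left
    ((mul_dvd_mul_iff_left (pow_ne_zero _ (by exact_mod_cast hp.ne_zero))).1 hdvd))

theorem natAbs_map_mul_pow_ne (hp : p.Prime) (hs : 1 ≤ s) {x z : R} (hx : x = 1 + p ^ s * z)
    {w : R} {t : ℕ}
    (ht : ¬ (L w ≡ t [ZMOD Int.gcd (p ^ (2 * s - 1)) (p ^ s * L (w * z))] ∨
      L w ≡ -t [ZMOD Int.gcd (p ^ (2 * s - 1)) (p ^ s * L (w * z))])) (m : ℕ) :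
    (L (w * x ^ m)).natAbs ≠ t := by
  intro h
  have hmod := (map_mul_one_add_pow_modEq_gcd L hp hs m w z).symm
  rw [← hx] at hmod
  refine ht ((Int.natAbs_eq (L (w * x ^ m))).imp (fun e => ?_) (fun e => ?_)) <;>
    rwa [← h, ← e]

theorem eq_zero_of_natAbs_map_mul_pow_eq (hp : p.Prime) (hs : 1 ≤ s) {x z : R}
    (hx : x = 1 + p ^ s * z) {w : R} {t : ℕ} (hb : ¬ (p : ℤ) ^ (s - 1) ∣ L (w * z))
    (hw : ¬ (p : ℤ) ^ s ∣ 2 * L w) (ht : (L w).natAbs = t) {m : ℕ}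
    (h : (L (w * x ^ m)).natAbs = t) : m = 0 := by
  subst hx
  by_contra hm
  rcases Int.natAbs_eq_natAbs_iff.1 (h.trans ht.symm) with e | e
  · exact map_mul_one_add_pow_ne L hp hs hb hm e
  · have hmod := (map_mul_one_add_pow_modEq_gcd L hp hs m w z).of_dvd
      (Int.dvd_coe_gcd (pow_dvd_pow _ (by omega : s ≤ 2 * s - 1)) (dvd_mul_right _ _))
    rw [e] at hmod
    exact hw (by simpa [two_mul, sub_neg_eq_add] using Int.ModEq.dvd hmod)

/-- `hS` asks that each residue `r` of `n` modulo `P` is either excluded by the congruence of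
`map_mul_one_add_pow_modEq_gcd`, or lies in `S` and satisfies the hypotheses of
`eq_zero_of_natAbs_map_mul_pow_eq`, which then forces `n = r`. -/
theorem mem_of_natAbs_map_mul_pow_eq (hp : p.Prime) (hs : 1 ≤ s) {P : ℕ} (hP : 0 < P) {x z : R}
    (hx : x ^ P = 1 + p ^ s * z) {β : R} {t : ℕ} {S : Finset ℕ}
    (hS : ∀ r < P,
      ¬ (L (β * x ^ r) ≡ t [ZMOD Int.gcd (p ^ (2 * s - 1)) (p ^ s * L (β * x ^ r * z))] ∨
        L (β * x ^ r) ≡ -t [ZMOD Int.gcd (p ^ (2 * s - 1)) (p ^ s * L (β * x ^ r * z))]) ∨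
      r ∈ S ∧ ¬ (p : ℤ) ^ (s - 1) ∣ L (β * x ^ r * z) ∧ ¬ (p : ℤ) ^ s ∣ 2 * L (β * x ^ r) ∧
        (L (β * x ^ r)).natAbs = t)
    {n : ℕ} (h : (L (β * x ^ n)).natAbs = t) : n ∈ S := by
  rw [← n.mod_add_div P, pow_add, pow_mul, ← mul_assoc] at h
  rcases hS (n % P) (n.mod_lt hP) with hdead | ⟨hS, hb, hw, ht⟩
  · exact absurd h (natAbs_map_mul_pow_ne L hp hs hx hdead _)
  · rwa [← n.mod_add_div P, eq_zero_of_natAbs_map_mul_pow_eq L hp hs hx hb hw ht h, mul_zero,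
      add_zero]

end AddMonoidHom

@[simps]
def Zsqrtd.reAddGroupHom (d : ℤ) : ℤ√d →+ ℤ where
  toFun := Zsqrtd.re
  map_zero' := rfl
  map_add' := Zsqrtd.re_add

@[simps]
def Zsqrtd.imAddGroupHom (d : ℤ) : ℤ√d →+ ℤ where
  toFun := Zsqrtd.im
  map_zero' := rfl
  map_add' := Zsqrtd.im_add

theorem Int.neg_one_le_and_le_one_of_mul_self_add_mul_self_le_two {a b : ℤ}
    (h : a * a + b * b ≤ 2) : -1 ≤ a ∧ a ≤ 1 := by
  constructor <;> nlinarith [mul_self_nonneg b]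

namespace GaussianInt

open Zsqrtd AddMonoidHom

def ϖ : GaussianInt := ⟨2, 1⟩

theorem varpi_mul_star : ϖ * star ϖ = 5 := by decide

theorem varpi_dvd_of_five_dvd {α : GaussianInt} (h : (5 : ℤ) ∣ 2 * α.re + α.im) : ϖ ∣ α := by
  obtain ⟨u, hu⟩ := h
  exact ⟨⟨u, 2 * u - α.re⟩, by ext <;> simp [ϖ]; linarith⟩

theorem varpi_dvd_or_varpi_dvd_star {α : GaussianInt} (h : (5 : ℤ) ∣ α.norm) :
    ϖ ∣ α ∨ ϖ ∣ star α := by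
  have h5 : (5 : ℤ) ∣ (2 * α.re + α.im) * (2 * α.re - α.im) := by
    rw [show (2 * α.re + α.im) * (2 * α.re - α.im) = 5 * α.re ^ 2 - α.norm by
      simp [norm_def]; ring]
    exact dvd_sub (dvd_mul_right _ _) h
  refine (Int.prime_ofNat_iff.2 (by norm_num)).dvd_or_dvd h5 |>.imp varpi_dvd_of_five_dvd
    fun h => varpi_dvd_of_five_dvd ?_
  simpa [sub_eq_add_neg] using h

theorem isCoprime_re_im_of_mul {x γ : GaussianInt} (h : IsCoprime (x * γ).re (x * γ).im) :
    IsCoprime γ.re γ.im := by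
  obtain ⟨u, v, h⟩ := h
  exact ⟨u * x.re + v * x.im, v * x.re - u * x.im, by
    simp [re_mul, im_mul] at h; linear_combination h⟩

theorem not_isCoprime_re_im_five_mul (γ : GaussianInt) : ¬ IsCoprime (5 * γ).re (5 * γ).im := by
  intro h
  have := h.isUnit_of_dvd' (x := 5) ⟨γ.re, by simp [re_mul]⟩ ⟨γ.im, by simp [im_mul]⟩
  norm_num [Int.isUnit_iff] at this

theorem exists_norm_eq_of_norm_eq_mul_five_pow {k : ℤ} (n : ℕ) :
    ∀ α : GaussianInt, IsCoprime α.re α.im → α.norm = k * 5 ^ n →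
      ∃ γ : GaussianInt, γ.norm = k ∧ (α = γ * ϖ ^ n ∨ star α = γ * ϖ ^ n) := by
  induction n with
  | zero => exact fun α _ h => ⟨α, by simpa using h, .inl (by simp)⟩
  | succ n ih =>
    have step : ∀ α : GaussianInt, IsCoprime α.re α.im → α.norm = k * 5 ^ (n + 1) → ϖ ∣ α →
        ∃ γ : GaussianInt, γ.norm = k ∧ (α = γ * ϖ ^ (n + 1) ∨ star α = γ * ϖ ^ (n + 1)) := by
      rintro α hα hnorm ⟨α', rfl⟩
      have hnorm' : α'.norm = k * 5 ^ n := by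
        rw [norm_mul, show ϖ.norm = 5 by decide, pow_succ] at hnorm; linarith
      obtain ⟨γ, hγ, h | h⟩ := ih α' (isCoprime_re_im_of_mul hα) hnorm'
      · exact ⟨γ, hγ, .inl (by rw [h]; ring)⟩
      · rcases n with _ | n
        · refine ⟨star γ, by rw [norm_conj, hγ], .inl ?_⟩
          rw [← star_star α', h]; simp [mul_comm]
        · refine absurd hα ?_
          rw [← star_star α', h, show ϖ * star (γ * ϖ ^ (n + 1)) = 5 * (star γ * star ϖ ^ n) by
            rw [← varpi_mul_star]; simp [star_pow]; ring]
          exact not_isCoprime_re_im_five_mul _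
    intro α hα hnorm
    rcases varpi_dvd_or_varpi_dvd_star
      (hnorm ▸ dvd_mul_of_dvd_right (dvd_pow_self 5 n.succ_ne_zero) k) with h | h
    · exact step α hα hnorm h
    · obtain ⟨γ, hγ, h⟩ := step (star α) (by simpa using hα.neg_right) (by rwa [norm_conj]) h
      exact ⟨γ, hγ, by rwa [star_star, or_comm] at h⟩

def absParts (α : GaussianInt) : Sym2 ℕ := s(α.re.natAbs, α.im.natAbs)

theorem absParts_mul_of_norm_eq_one {u : GaussianInt} (hu : u.norm = 1) (α : GaussianInt) :
    absParts (u * α) = absParts α := by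
  obtain ⟨a, b⟩ := u
  rw [norm_def] at hu
  obtain ⟨ha₁, ha₂⟩ :=
    Int.neg_one_le_and_le_one_of_mul_self_add_mul_self_le_two (a := a) (b := b) (by linarith)
  obtain ⟨hb₁, hb₂⟩ :=
    Int.neg_one_le_and_le_one_of_mul_self_add_mul_self_le_two (a := b) (b := a) (by linarith)
  interval_cases a <;> interval_cases b <;> simp at hu <;>
    simp [absParts, re_mul, im_mul, Sym2.eq_swap]

theorem absParts_mul_of_norm_eq_two {u : GaussianInt} (hu : u.norm = 2) (α : GaussianInt) :
    absParts (u * α) = absParts (⟨1, 1⟩ * α) := by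
  obtain ⟨a, b⟩ := u
  rw [norm_def] at hu
  obtain ⟨ha₁, ha₂⟩ :=
    Int.neg_one_le_and_le_one_of_mul_self_add_mul_self_le_two (a := a) (b := b) (by linarith)
  obtain ⟨hb₁, hb₂⟩ :=
    Int.neg_one_le_and_le_one_of_mul_self_add_mul_self_le_two (a := b) (b := a) (by linarith)
  interval_cases a <;> interval_cases b <;> simp at hu <;>
    simp [absParts, re_mul, im_mul, Sym2.eq_swap] <;> omega

theorem exists_absParts_eq {y c : ℕ} (hyc : y.Coprime c) {k : ℤ} {n : ℕ}
    (h : y ^ 2 + c ^ 2 = k * 5 ^ n) :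
    ∃ γ : GaussianInt, γ.norm = k ∧ absParts (γ * ϖ ^ n) = s(y, c) := by
  obtain ⟨γ, hγ, hα⟩ := exists_norm_eq_of_norm_eq_mul_five_pow n ⟨y, c⟩
    (Nat.isCoprime_iff_coprime.2 hyc) (by rw [norm_def, ← h]; ring)
  refine ⟨γ, hγ, ?_⟩
  rcases hα with hα | hα <;> simp [← hα, absParts]

theorem absParts_varpi_pow_eq {y c n : ℕ} (hyc : y.Coprime c) (h : y ^ 2 + c ^ 2 = 5 ^ n) :
    absParts (ϖ ^ n) = s(y, c) := by
  obtain ⟨γ, hγ, hα⟩ := exists_absParts_eq hyc (k := 1) (by exact_mod_cast h.trans (one_mul _).symm)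
  rwa [absParts_mul_of_norm_eq_one hγ] at hα

theorem absParts_one_add_I_mul_varpi_pow_eq {y c n : ℕ} (hyc : y.Coprime c)
    (h : y ^ 2 + c ^ 2 = 2 * 5 ^ n) : absParts (⟨1, 1⟩ * ϖ ^ n) = s(y, c) := by
  obtain ⟨γ, hγ, hα⟩ := exists_absParts_eq hyc (k := 2) (by exact_mod_cast h)
  rwa [absParts_mul_of_norm_eq_two hγ] at hα

theorem varpi_pow_eight : ϖ ^ 8 = 1 + (2 : ℕ) ^ 4 * ⟨-33, -21⟩ := by decide

theorem varpi_pow_sixteen : ϖ ^ 16 = 1 + (2 : ℕ) ^ 5 * ⟨5151, 11067⟩ := by decide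

theorem natAbs_re_varpi_pow_eq_one {n : ℕ} (h : (ϖ ^ n).re.natAbs = 1) : n = 0 := by
  simpa using mem_of_natAbs_map_mul_pow_eq (reAddGroupHom _) Nat.prime_two (by norm_num)
    (by norm_num) varpi_pow_eight (β := 1) (t := 1) (S := {0}) (by decide) (by simpa using h)

theorem natAbs_im_varpi_pow_eq_one {n : ℕ} (h : (ϖ ^ n).im.natAbs = 1) : n = 1 := by
  simpa using mem_of_natAbs_map_mul_pow_eq (imAddGroupHom _) Nat.prime_two (by norm_num)
    (by norm_num) varpi_pow_eight (β := 1) (t := 1) (S := {1}) (by decide) (by simpa using h)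

theorem natAbs_re_varpi_pow_eq_two {n : ℕ} (h : (ϖ ^ n).re.natAbs = 2) : n = 1 ∨ n = 3 := by
  simpa using mem_of_natAbs_map_mul_pow_eq (reAddGroupHom _) Nat.prime_two (by norm_num)
    (by norm_num) varpi_pow_eight (β := 1) (t := 2) (S := {1, 3}) (by decide) (by simpa using h)

theorem natAbs_im_varpi_pow_ne_two (n : ℕ) : (ϖ ^ n).im.natAbs ≠ 2 := fun h => by
  simpa using mem_of_natAbs_map_mul_pow_eq (imAddGroupHom _) Nat.prime_two (by norm_num)
    (by norm_num) varpi_pow_eight (β := 1) (t := 2) (S := ∅) (by decide) (by simpa using h)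

theorem natAbs_re_one_add_I_mul_varpi_pow_eq_one {n : ℕ}
    (h : (⟨1, 1⟩ * ϖ ^ n : GaussianInt).re.natAbs = 1) : n = 0 ∨ n = 1 ∨ n = 2 := by
  simpa using mem_of_natAbs_map_mul_pow_eq (reAddGroupHom _) Nat.prime_two (by norm_num)
    (by norm_num) varpi_pow_eight (S := {0, 1, 2}) (by decide) h

theorem natAbs_im_one_add_I_mul_varpi_pow_eq_one {n : ℕ}
    (h : (⟨1, 1⟩ * ϖ ^ n : GaussianInt).im.natAbs = 1) : n = 0 := by
  simpa using mem_of_natAbs_map_mul_pow_eq (imAddGroupHom _) Nat.prime_two (by norm_num)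
    (by norm_num) varpi_pow_eight (S := {0}) (by decide) h

theorem natAbs_re_one_add_I_mul_varpi_pow_ne_three (n : ℕ) :
    (⟨1, 1⟩ * ϖ ^ n : GaussianInt).re.natAbs ≠ 3 := fun h => by
  simpa using mem_of_natAbs_map_mul_pow_eq (reAddGroupHom _) Nat.prime_two (by norm_num)
    (by norm_num) varpi_pow_sixteen (S := ∅) (by decide) h

theorem natAbs_im_one_add_I_mul_varpi_pow_eq_three {n : ℕ}
    (h : (⟨1, 1⟩ * ϖ ^ n : GaussianInt).im.natAbs = 3) : n = 1 ∨ n = 5 := by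
  simpa using mem_of_natAbs_map_mul_pow_eq (imAddGroupHom _) Nat.prime_two (by norm_num)
    (by norm_num) varpi_pow_sixteen (S := {1, 5}) (by decide) h

end GaussianInt

open GaussianInt

theorem five_pow_eq_one_add_sq_iff {n y : ℕ} (hn : n ≠ 0) :
    5 ^ n = 1 + y ^ 2 ↔ (n, y) = (1, 2) := by
  refine ⟨fun h => ?_, fun h => by simp_all⟩
  rcases Sym2.eq_iff.1 (absParts_varpi_pow_eq (n := n) (Nat.coprime_one_right y) (by rw [h]; ring))
    with ⟨hre, him⟩ | ⟨hre, him⟩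
  · obtain rfl := natAbs_im_varpi_pow_eq_one him
    subst hre; decide
  · exact absurd (natAbs_re_varpi_pow_eq_one hre) hn

theorem five_pow_eq_four_add_sq_iff {n y : ℕ} :
    5 ^ n = 4 + y ^ 2 ↔ (n, y) = (1, 1) ∨ (n, y) = (3, 11) := by
  refine ⟨fun h => ?_, by rintro (h | h) <;> simp_all⟩
  have hy : y.Coprime 2 := by
    rcases Nat.even_or_odd y with ⟨t, rfl⟩ | hy
    · exact absurd ⟨2 + 2 * t ^ 2, by rw [h]; ring⟩
        (Nat.not_even_iff_odd.2 (Odd.pow (by decide : Odd 5)))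
    · exact Nat.coprime_two_right.2 hy
  rcases Sym2.eq_iff.1 (absParts_varpi_pow_eq (n := n) hy (by rw [h]; ring))
    with ⟨hre, him⟩ | ⟨hre, him⟩
  · exact absurd him (natAbs_im_varpi_pow_ne_two n)
  · rcases natAbs_re_varpi_pow_eq_two hre with rfl | rfl <;> subst him <;> decide

theorem five_pow_eq_nine_add_sq_iff {n y : ℕ} : 5 ^ n = 9 + y ^ 2 ↔ (n, y) = (2, 4) := by
  refine ⟨fun h => ?_, fun h => by simp_all⟩
  obtain ⟨m, rfl | rfl⟩ := Nat.even_or_odd' n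
  · have h' : (5 ^ m) ^ 2 = 9 + y ^ 2 := by rw [← pow_mul, mul_comm]; exact h
    have hy : y < 5 ^ m := by by_contra! hle; nlinarith [Nat.mul_le_mul hle hle]
    have hy4 : y ≤ 4 := by nlinarith
    have hm : m ≤ 1 := (Nat.pow_le_pow_iff_right (by norm_num : 1 < 5)).1 (by nlinarith)
    interval_cases m <;> interval_cases y <;> simp_all
  · have h3 := congrArg (Nat.cast : ℕ → ZMod 3) h
    push_cast at h3
    rw [pow_succ, pow_mul, show (5 : ZMod 3) ^ 2 = 1 from rfl, one_pow, one_mul] at h3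
    exfalso
    generalize (y : ZMod 3) = x at h3
    revert x; decide

theorem two_mul_five_pow_eq_one_add_sq_iff {n y : ℕ} (hn : n ≠ 0) :
    2 * 5 ^ n = 1 + y ^ 2 ↔ (n, y) = (1, 3) ∨ (n, y) = (2, 7) := by
  refine ⟨fun h => ?_, by rintro (h | h) <;> simp_all⟩
  rcases Sym2.eq_iff.1
    (absParts_one_add_I_mul_varpi_pow_eq (n := n) (Nat.coprime_one_right y) (by rw [h]; ring))
    with ⟨hre, him⟩ | ⟨hre, him⟩
  · exact absurd (natAbs_im_one_add_I_mul_varpi_pow_eq_one him) hn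
  · rcases natAbs_re_one_add_I_mul_varpi_pow_eq_one hre with rfl | rfl | rfl
    · exact absurd rfl hn
    all_goals subst him; decide

theorem two_mul_five_pow_ne_four_add_sq (n y : ℕ) : 2 * 5 ^ n ≠ 4 + y ^ 2 := by
  intro h
  have h4 := congrArg (Nat.cast : ℕ → ZMod 4) h
  push_cast at h4
  rw [show (5 : ZMod 4) = 1 from rfl, one_pow] at h4
  generalize (y : ZMod 4) = x at h4
  revert x; decide

theorem two_mul_five_pow_eq_nine_add_sq_iff {n y : ℕ} :
    2 * 5 ^ n = 9 + y ^ 2 ↔ (n, y) = (1, 1) ∨ (n, y) = (5, 79) := by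
  refine ⟨fun h => ?_, by rintro (h | h) <;> simp_all⟩
  have hy : y.Coprime 3 := by
    refine Nat.coprime_comm.1 ((Nat.prime_three.coprime_iff_not_dvd).2 fun h3 => ?_)
    have h3' : 3 ∣ 2 * 5 ^ n := h ▸ (Nat.dvd_add_right (by norm_num)).2 (dvd_pow h3 two_ne_zero)
    have hcop : Nat.Coprime 3 (2 * 5 ^ n) :=
      Nat.Coprime.mul_right (by norm_num) (Nat.Coprime.pow_right _ (by norm_num))
    exact absurd (hcop.eq_one_of_dvd h3') (by norm_num)
  rcases Sym2.eq_iff.1 (absParts_one_add_I_mul_varpi_pow_eq (n := n) hy (by rw [h]; ring))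
    with ⟨hre, him⟩ | ⟨hre, him⟩
  · rcases natAbs_im_one_add_I_mul_varpi_pow_eq_three him with rfl | rfl <;> subst hre <;> decide
  · exact absurd hre (natAbs_re_one_add_I_mul_varpi_pow_ne_three n)

/-- Solutions in positive integers of `2^i·5^n = a + y²` for `i ∈ {0,1}`,
`a ∈ {1, 4, 9}`. -/
theorem stmt_4 :
    ∀ n y : ℕ, 0 < n → 0 < y →
      ((5 ^ n = 1 + y ^ 2 ↔ (n, y) = (1, 2)) ∧
       (5 ^ n = 4 + y ^ 2 ↔ (n, y) = (1, 1) ∨ (n, y) = (3, 11)) ∧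
       (5 ^ n = 9 + y ^ 2 ↔ (n, y) = (2, 4)) ∧
       (2 * 5 ^ n = 1 + y ^ 2 ↔ (n, y) = (1, 3) ∨ (n, y) = (2, 7)) ∧
       (2 * 5 ^ n ≠ 4 + y ^ 2) ∧
       (2 * 5 ^ n = 9 + y ^ 2 ↔ (n, y) = (1, 1) ∨ (n, y) = (5, 79))) := by
  intro n y hn _
  exact ⟨five_pow_eq_one_add_sq_iff hn.ne', five_pow_eq_four_add_sq_iff,
    five_pow_eq_nine_add_sq_iff, two_mul_five_pow_eq_one_add_sq_iff hn.ne',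
    two_mul_five_pow_ne_four_add_sq n y, two_mul_five_pow_eq_nine_add_sq_iff⟩
end

section
/- Let n be a square-free positive integer and let f(x, y, z) = 3x² + 25y² + 25z² − 10xy − 10xz. Then for every prime p there exist p-adic integers x, y, z ∈ ℤ_p with f(x, y, z) = n if and only if n ≢ 7 (mod 8) and n ≡ 2 or 3 (mod 5). -/
/-!
Completing squares gives `f(x, y, z) = x² + (5y − x)² + (5z − x)²`, so for `p ≠ 5` the form is
equivalent over `ℤ_p` to the sum of three squares. For odd `p` that sum represents every
`p`-adic integer (write a residue as a sum of two squares plus `1`, then lift the last square by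
Hensel), and over `ℤ_2` it represents `n` exactly when `n ≢ 7 (mod 8)`, as long as `4 ∤ n`.
At `p = 5` we have `f ≡ 3x² (mod 5)`: a represented `n` is `≡ 2, 3 (mod 5)` unless `5 ∣ x`, and
then `25 ∣ f(x, y, z)`; conversely `n ≡ 3b² (mod 5)` lifts to `3x² = n` by Hensel.
-/

open Polynomial

def ternaryForm {R : Type*} [CommRing R] (x y z : R) : R :=
  3 * x ^ 2 + 25 * y ^ 2 + 25 * z ^ 2 - 10 * x * y - 10 * x * z

theorem ternaryForm_eq_sq_add_sq_add_sq {R : Type*} [CommRing R] (x y z : R) :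
    ternaryForm x y z = x ^ 2 + (5 * y - x) ^ 2 + (5 * z - x) ^ 2 := by
  unfold ternaryForm
  ring

theorem exists_ternaryForm_eq_of_sq_add_sq_add_sq {R : Type*} [CommRing R] (h5 : IsUnit (5 : R))
    {n : R} (h : ∃ x y z : R, x ^ 2 + y ^ 2 + z ^ 2 = n) : ∃ x y z : R, ternaryForm x y z = n := by
  obtain ⟨x, y, z, rfl⟩ := h
  obtain ⟨u, hu⟩ := h5.exists_right_inv
  refine ⟨x, u * (y + x), u * (z + x), ?_⟩
  have hy : 5 * (u * (y + x)) - x = y := by linear_combination (y + x) * hu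
  have hz : 5 * (u * (z + x)) - x = z := by linear_combination (z + x) * hu
  rw [ternaryForm_eq_sq_add_sq_add_sq, hy, hz]

theorem ZMod.sq_add_sq_add_sq_ne_seven : ∀ x y z : ZMod 8, x ^ 2 + y ^ 2 + z ^ 2 ≠ 7 := by
  decide

theorem ZMod.eq_zero_or_three_mul_sq_eq_two_or_three (t : ZMod 5) :
    t = 0 ∨ 3 * t ^ 2 = 2 ∨ 3 * t ^ 2 = 3 := by
  revert t
  decide

instance Nat.fact_prime_five : Fact (Nat.Prime 5) := ⟨Nat.prime_five⟩

namespace PadicInt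

variable {p : ℕ} [Fact p.Prime]

theorem exists_mul_sq_eq_of_norm_lt {a b c : ℤ_[p]} (h : ‖c * b ^ 2 - a‖ < ‖2 * c * b‖ ^ 2) :
    ∃ x, c * x ^ 2 = a := by
  obtain ⟨x, hx, -⟩ := hensels_lemma (F := C c * X ^ 2 - C a) (a := b) (by
    simp only [derivative_C_mul_X_pow, derivative_C, sub_zero, map_sub, map_mul, aeval_C,
      aeval_X_pow, Algebra.algebraMap_self, RingHom.id_apply]
    convert h using 3
    push_cast
    ring)
  exact ⟨x, by simpa [sub_eq_zero] using hx⟩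

theorem norm_lt_one_iff_toZMod_eq_zero {x : ℤ_[p]} : ‖x‖ < 1 ↔ toZMod x = 0 := by
  rw [← RingHom.mem_ker, ker_toZMod, IsLocalRing.mem_maximalIdeal, mem_nonunits]

theorem norm_two_eq_one (hp : p ≠ 2) : ‖(2 : ℤ_[p])‖ = 1 := by
  exact_mod_cast norm_natCast_eq_one_iff.mpr ((Nat.coprime_primes Fact.out Nat.prime_two).mpr hp)

theorem isUnit_five (hp : p ≠ 5) : IsUnit (5 : ℤ_[p]) := by
  rw [isUnit_iff]
  exact_mod_cast norm_natCast_eq_one_iff.mpr ((Nat.coprime_primes Fact.out Nat.prime_five).mpr hp)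

theorem exists_sq_add_sq_add_sq_eq (hp : p ≠ 2) (a : ℤ_[p]) :
    ∃ x y z : ℤ_[p], x ^ 2 + y ^ 2 + z ^ 2 = a := by
  obtain ⟨x₀, y₀, hxy⟩ := ZMod.sq_add_sq p (toZMod a - 1)
  obtain ⟨x, hx⟩ := ZMod.ringHom_surjective (toZMod : ℤ_[p] →+* ZMod p) x₀
  obtain ⟨y, hy⟩ := ZMod.ringHom_surjective (toZMod : ℤ_[p] →+* ZMod p) y₀
  obtain ⟨z, hz⟩ := exists_mul_sq_eq_of_norm_lt (a := a - x ^ 2 - y ^ 2) (b := 1) (c := 1) (by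
    rw [mul_one, mul_one, one_pow, norm_two_eq_one hp, one_pow, norm_lt_one_iff_toZMod_eq_zero]
    simp only [mul_one, map_sub, map_one, map_pow, hx, hy]
    linear_combination hxy)
  exact ⟨x, y, z, by linear_combination hz⟩

theorem exists_sq_add_sq_add_sq_eq_natCast_of_two {n : ℕ} (h7 : n % 8 ≠ 7) (h4 : ¬ 4 ∣ n) :
    ∃ x y z : ℤ_[2], x ^ 2 + y ^ 2 + z ^ 2 = n := by
  obtain ⟨x, y, hxy⟩ : ∃ x y : ℤ, (2 : ℤ) ^ 3 ∣ x ^ 2 + y ^ 2 + 1 - n := by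
    have : n % 8 = 1 ∨ n % 8 = 2 ∨ n % 8 = 3 ∨ n % 8 = 5 ∨ n % 8 = 6 := by omega
    rcases this with h | h | h | h | h
    exacts [⟨0, 0, by norm_num; omega⟩, ⟨1, 0, by norm_num; omega⟩, ⟨1, 1, by norm_num; omega⟩,
      ⟨2, 0, by norm_num; omega⟩, ⟨2, 1, by norm_num; omega⟩]
  have hnorm : ‖1 * 1 ^ 2 - (n - x ^ 2 - y ^ 2 : ℤ_[2])‖ < ‖2 * 1 * (1 : ℤ_[2])‖ ^ 2 :=
    calc ‖1 * 1 ^ 2 - (n - x ^ 2 - y ^ 2 : ℤ_[2])‖ = ‖((x ^ 2 + y ^ 2 + 1 - n : ℤ) : ℤ_[2])‖ := by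
          push_cast; congr 1; ring
      _ ≤ (2 : ℝ) ^ (-3 : ℤ) := by exact_mod_cast norm_int_le_pow_iff_dvd.mpr hxy
      _ < ‖2 * 1 * (1 : ℤ_[2])‖ ^ 2 := by
          rw [mul_one, mul_one, (by exact_mod_cast norm_p : ‖(2 : ℤ_[2])‖ = 2⁻¹)]
          norm_num
  obtain ⟨z, hz⟩ := exists_mul_sq_eq_of_norm_lt hnorm
  exact ⟨x, y, z, by linear_combination hz⟩

theorem natCast_mod_eight_ne_seven_of_sq_add_sq_add_sq {n : ℕ} {x y z : ℤ_[2]}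
    (h : x ^ 2 + y ^ 2 + z ^ 2 = n) : n % 8 ≠ 7 := by
  have h8 := congrArg (toZModPow 3) h
  simp only [map_add, map_pow, map_natCast] at h8
  intro h7
  rw [← ZMod.natCast_mod, show n % 2 ^ 3 = 7 from h7] at h8
  exact ZMod.sq_add_sq_add_sq_ne_seven _ _ _ h8

theorem exists_three_mul_sq_eq_natCast_of_five {n : ℕ} (hn : n % 5 = 2 ∨ n % 5 = 3) :
    ∃ x : ℤ_[5], 3 * x ^ 2 = n := by
  obtain ⟨b, hb, hdvd⟩ : ∃ b : ℕ, Nat.Coprime 5 (6 * b) ∧ (5 : ℤ) ∣ 3 * b ^ 2 - n := by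
    rcases hn with h | h
    exacts [⟨2, by norm_num, by omega⟩, ⟨1, by norm_num, by omega⟩]
  apply exists_mul_sq_eq_of_norm_lt (b := b)
  have h1 : ‖((6 * b : ℕ) : ℤ_[5])‖ = 1 := norm_natCast_eq_one_iff.mpr hb
  have h2 : ‖((3 * b ^ 2 - n : ℤ) : ℤ_[5])‖ < 1 := norm_int_lt_one_iff_dvd _ |>.mpr hdvd
  push_cast at h1 h2
  rw [show (2 : ℤ_[5]) * 3 * b = 6 * b by ring, h1, one_pow]
  exact h2

theorem natCast_mod_five_of_ternaryForm_eq {n : ℕ} (hsf : Squarefree n) {x y z : ℤ_[5]}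
    (h : ternaryForm x y z = n) : n % 5 = 2 ∨ n % 5 = 3 := by
  have h5 : (n : ZMod 5) = 3 * toZMod x ^ 2 := by
    rw [← map_natCast toZMod, ← h, ternaryForm]
    simp only [map_sub, map_add, map_mul, map_pow, map_ofNat]
    reduce_mod_char
  rcases ZMod.eq_zero_or_three_mul_sq_eq_two_or_three (toZMod x) with hx | hx | hx
  · obtain ⟨w, rfl⟩ := (norm_lt_one_iff_dvd x).mp (norm_lt_one_iff_toZMod_eq_zero.mpr hx)
    have h25 : toZModPow 2 (n : ℤ_[5]) = 0 := by
      rw [← RingHom.mem_ker, ker_toZModPow, Ideal.mem_span_singleton]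
      exact ⟨3 * w ^ 2 + y ^ 2 + z ^ 2 - 2 * w * y - 2 * w * z,
        by rw [← h, ternaryForm]; push_cast; ring⟩
    rw [map_natCast, ZMod.natCast_eq_zero_iff] at h25
    exact absurd (hsf 5 (by simpa [sq] using h25)) (by norm_num)
  · left
    rw [← ZMod.val_natCast, h5, hx]
    rfl
  · right
    rw [← ZMod.val_natCast, h5, hx]
    rfl

end PadicInt

theorem stmt_9_general (n : ℕ) (hsf : Squarefree n) :
    (∀ (p : ℕ) [Fact p.Prime], ∃ x y z : ℤ_[p],
        3 * x ^ 2 + 25 * y ^ 2 + 25 * z ^ 2 - 10 * x * y - 10 * x * z = (n : ℤ_[p])) ↔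
    (n % 8 ≠ 7 ∧ (n % 5 = 2 ∨ n % 5 = 3)) := by
  constructor
  · intro h
    obtain ⟨x, y, z, h2⟩ := h 2
    obtain ⟨x', y', z', h5⟩ := h 5
    rw [← ternaryForm, ternaryForm_eq_sq_add_sq_add_sq] at h2
    exact ⟨PadicInt.natCast_mod_eight_ne_seven_of_sq_add_sq_add_sq h2,
      PadicInt.natCast_mod_five_of_ternaryForm_eq hsf h5⟩
  · rintro ⟨h8, h5⟩ p _
    rcases eq_or_ne p 5 with rfl | hp5
    · obtain ⟨x, hx⟩ := PadicInt.exists_three_mul_sq_eq_natCast_of_five h5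
      exact ⟨x, 0, 0, by linear_combination hx⟩
    apply exists_ternaryForm_eq_of_sq_add_sq_add_sq (PadicInt.isUnit_five hp5)
    rcases eq_or_ne p 2 with rfl | hp2
    · exact PadicInt.exists_sq_add_sq_add_sq_eq_natCast_of_two h8 fun h4 => by simpa using hsf 2 h4
    · exact PadicInt.exists_sq_add_sq_add_sq_eq hp2 _

/-- A square-free positive integer `n` is represented by
`f(x,y,z) = 3x² + 25y² + 25z² − 10xy − 10xz` over `ℤ_p` for every prime `p` iff
`n ≢ 7 (mod 8)` and `n ≡ 2` or `3 (mod 5)`. -/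
theorem stmt_9 (n : ℕ) (hn : 0 < n) (hsf : Squarefree n) :
    (∀ (p : ℕ) [Fact p.Prime], ∃ x y z : ℤ_[p],
        3 * x ^ 2 + 25 * y ^ 2 + 25 * z ^ 2 - 10 * x * y - 10 * x * z = (n : ℤ_[p])) ↔
    (n % 8 ≠ 7 ∧ (n % 5 = 2 ∨ n % 5 = 3)) :=
  stmt_9_general n hsf
end

section
/- Let n be a positive integer with n ≡ 2 (mod 5). If there exist integers a, b, c with n = 3a² + 25b² + 25c² − 10ab − 10ac, then n is a sum of three nonunit squares, i.e., there exist integers x, y, z with n = x² + y² + z² and x² ≠ 1, y² ≠ 1, z² ≠ 1. -/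
/-!
The form splits as `f(a, b, c) = a² + (a - 5b)² + (a - 5c)²`, a sum of three squares that are all
congruent to `a²` modulo 5. Hence `n ≡ 3a² (mod 5)`, and `n ≡ 2` forces `a² ≡ 4`, so none of the
three squares is `1`.
-/

lemma three_mul_sq_add_eq_sq_add_sq_sub_five_mul (a b c : ℤ) :
    3 * a ^ 2 + 25 * b ^ 2 + 25 * c ^ 2 - 10 * a * b - 10 * a * c =
      a ^ 2 + (a - 5 * b) ^ 2 + (a - 5 * c) ^ 2 := by
  ring

lemma ZMod.intCast_sub_five_mul (a b : ℤ) : ((a - 5 * b : ℤ) : ZMod 5) = a := by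
  push_cast
  rw [show (5 : ZMod 5) = 0 from rfl, zero_mul, sub_zero]

lemma ZMod.sq_ne_one_of_three_mul_sq_eq_two : ∀ x : ZMod 5, 3 * x ^ 2 = 2 → x ^ 2 ≠ 1 := by
  decide

lemma Int.sq_ne_one_of_intCast_sq_ne_one {m : ℕ} {x : ℤ} (h : (x : ZMod m) ^ 2 ≠ 1) :
    x ^ 2 ≠ 1 := by
  intro hx
  exact h (by exact_mod_cast congrArg (Int.cast : ℤ → ZMod m) hx)

theorem stmt_10_general (n : ℕ) (h5 : n % 5 = 2)
    (hf : ∃ a b c : ℤ,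
      (n : ℤ) = 3 * a ^ 2 + 25 * b ^ 2 + 25 * c ^ 2 - 10 * a * b - 10 * a * c) :
    ∃ x y z : ℤ, (n : ℤ) = x ^ 2 + y ^ 2 + z ^ 2 ∧
      x ^ 2 ≠ 1 ∧ y ^ 2 ≠ 1 ∧ z ^ 2 ≠ 1 := by
  obtain ⟨a, b, c, h⟩ := hf
  rw [three_mul_sq_add_eq_sq_add_sq_sub_five_mul] at h
  have ha : (a : ZMod 5) ^ 2 ≠ 1 := by
    apply ZMod.sq_ne_one_of_three_mul_sq_eq_two
    have hmod := congrArg (Int.cast : ℤ → ZMod 5) h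
    rw [Int.cast_add, Int.cast_add, Int.cast_pow, Int.cast_pow, Int.cast_pow,
      ZMod.intCast_sub_five_mul, ZMod.intCast_sub_five_mul, Int.cast_natCast,
      ← ZMod.natCast_mod, h5] at hmod
    linear_combination -hmod
  have hne : ∀ d : ℤ, (a - 5 * d) ^ 2 ≠ 1 := fun d =>
    Int.sq_ne_one_of_intCast_sq_ne_one (by rwa [ZMod.intCast_sub_five_mul])
  exact ⟨a, a - 5 * b, a - 5 * c, h, Int.sq_ne_one_of_intCast_sq_ne_one ha, hne b, hne c⟩

/-- If `n ≡ 2 (mod 5)` is represented by `f(x,y,z) = 3x² + 25y² + 25z² − 10xy − 10xz`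
over `ℤ`, then `n` is a sum of three nonunit squares. -/
theorem stmt_10 (n : ℕ) (hn : 0 < n) (h5 : n % 5 = 2)
    (hf : ∃ a b c : ℤ,
      (n : ℤ) = 3 * a ^ 2 + 25 * b ^ 2 + 25 * c ^ 2 - 10 * a * b - 10 * a * c) :
    ∃ x y z : ℤ, (n : ℤ) = x ^ 2 + y ^ 2 + z ^ 2 ∧
      x ^ 2 ≠ 1 ∧ y ^ 2 ≠ 1 ∧ z ^ 2 ≠ 1 :=
  stmt_10_general n h5 hf
end

section
/- Let n be a positive integer with n ≡ 3 (mod 5). If there exist integers a, b, c with n = 2a² + 25b² + 25c² − 10ab, then n is a sum of three nonunit squares, i.e., there exist integers x, y, z with n = x² + y² + z² and x² ≠ 1, y² ≠ 1, z² ≠ 1. -/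
/-!
The form splits as `2a² + 25b² + 25c² − 10ab = a² + (a − 5b)² + (5c)²`. Modulo 5 the left side
is `2a²`, so `n ≡ 3` forces `a² ≡ 4`; hence neither `a²` nor `(a − 5b)² ≡ a²` equals 1, and
`(5c)²` is a multiple of 25.
-/

theorem two_sq_add_25_sq_add_25_sq_sub_eq (a b c : ℤ) :
    2 * a ^ 2 + 25 * b ^ 2 + 25 * c ^ 2 - 10 * a * b = a ^ 2 + (a - 5 * b) ^ 2 + (5 * c) ^ 2 := by
  ring

theorem sq_emod_five_eq_four_of_emod_five_eq_three {a b c : ℤ}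
    (h : (2 * a ^ 2 + 25 * b ^ 2 + 25 * c ^ 2 - 10 * a * b) % 5 = 3) : a ^ 2 % 5 = 4 := by
  have : 2 * a ^ 2 + 25 * b ^ 2 + 25 * c ^ 2 - 10 * a * b
      = 2 * a ^ 2 + 5 * (5 * b ^ 2 + 5 * c ^ 2 - 2 * a * b) := by ring
  omega

theorem sub_five_mul_sq_emod_five (a b : ℤ) : (a - 5 * b) ^ 2 % 5 = a ^ 2 % 5 := by
  have : (a - 5 * b) ^ 2 = a ^ 2 + 5 * (5 * b ^ 2 - 2 * a * b) := by ring
  omega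

theorem five_mul_sq_ne_one (c : ℤ) : (5 * c) ^ 2 ≠ 1 := by
  have : (5 * c) ^ 2 = 25 * c ^ 2 := by ring
  omega

theorem stmt_11_general (n : ℕ) (h5 : n % 5 = 3)
    (hg : ∃ a b c : ℤ,
      (n : ℤ) = 2 * a ^ 2 + 25 * b ^ 2 + 25 * c ^ 2 - 10 * a * b) :
    ∃ x y z : ℤ, (n : ℤ) = x ^ 2 + y ^ 2 + z ^ 2 ∧
      x ^ 2 ≠ 1 ∧ y ^ 2 ≠ 1 ∧ z ^ 2 ≠ 1 := by
  obtain ⟨a, b, c, h⟩ := hg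
  have ha : a ^ 2 % 5 = 4 := 
    sq_emod_five_eq_four_of_emod_five_eq_three (b := b) (c := c) (by omega)
  have hb : (a - 5 * b) ^ 2 % 5 = 4 := (sub_five_mul_sq_emod_five a b).trans ha
  exact ⟨a, a - 5 * b, 5 * c, h.trans (two_sq_add_25_sq_add_25_sq_sub_eq a b c),
    by omega, by omega, five_mul_sq_ne_one c⟩

/-- If `n ≡ 3 (mod 5)` is represented by `g(x,y,z) = 2x² + 25y² + 25z² − 10xy`
over `ℤ`, then `n` is a sum of three nonunit squares. -/
theorem stmt_11 (n : ℕ) (hn : 0 < n) (h5 : n % 5 = 3)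
    (hg : ∃ a b c : ℤ,
      (n : ℤ) = 2 * a ^ 2 + 25 * b ^ 2 + 25 * c ^ 2 - 10 * a * b) :
    ∃ x y z : ℤ, (n : ℤ) = x ^ 2 + y ^ 2 + z ^ 2 ∧
      x ^ 2 ≠ 1 ∧ y ^ 2 ≠ 1 ∧ z ^ 2 ≠ 1 :=
  stmt_11_general n h5 hg
end

section
/- Let m be a positive integer with m ≠ 3, and suppose m = a² + b² + c² for integers a, b, c with abc not divisible by 3. Then there exist integers A, B, C such that 9m = A² + B² + C², the product ABC is not divisible by 3, and A² ≠ 1, B² ≠ 1, C² ≠ 1. -/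
/-!
After changing signs we may assume `a ≡ b ≡ c ≡ 1 (mod 3)`. Each of three matrices `M` with
entries `±1, ±2` and `Mᵀ M = 9 I` gives an identity `9 (x² + y² + z²) = A² + B² + C²` whose
linear forms `A, B, C` are all `≡ 2 (mod 3)`; such a form has `A² = 1` only when `A = -1`.
If every one of the three identities had an entry `-1`, the resulting linear
equations would force `x = y = z = 1`, i.e. `m = 3`.
-/

def IsAdmissible (A B C : ℤ) : Prop :=
  ¬(3 : ℤ) ∣ A * B * C ∧ A ^ 2 ≠ 1 ∧ B ^ 2 ≠ 1 ∧ C ^ 2 ≠ 1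

lemma Int.exists_sq_eq_sq_and_emod_three_eq_one {a : ℤ} (ha : ¬(3 : ℤ) ∣ a) :
    ∃ x : ℤ, x ^ 2 = a ^ 2 ∧ x % 3 = 1 := by
  by_cases h : a % 3 = 1
  · exact ⟨a, rfl, h⟩
  · exact ⟨-a, neg_sq a, by omega⟩

lemma Int.sq_ne_one_of_emod_three_eq_two {t : ℤ} (ht : t % 3 = 2) (ht1 : t ≠ -1) :
    t ^ 2 ≠ 1 := by
  rw [Ne, sq_eq_one_iff]
  omega

lemma Int.not_three_dvd_mul_of_emod_three_eq_two {A B C : ℤ} (hA : A % 3 = 2) (hB : B % 3 = 2)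
    (hC : C % 3 = 2) : ¬(3 : ℤ) ∣ A * B * C := by
  rw [Int.dvd_iff_emod_eq_zero, Int.mul_emod, Int.mul_emod A, hA, hB, hC]
  decide

lemma isAdmissible_of_emod_three_eq_two {A B C : ℤ} (hA : A % 3 = 2) (hB : B % 3 = 2)
    (hC : C % 3 = 2) (hA1 : A ≠ -1) (hB1 : B ≠ -1) (hC1 : C ≠ -1) : IsAdmissible A B C :=
  ⟨Int.not_three_dvd_mul_of_emod_three_eq_two hA hB hC, Int.sq_ne_one_of_emod_three_eq_two hA hA1,
    Int.sq_ne_one_of_emod_three_eq_two hB hB1, Int.sq_ne_one_of_emod_three_eq_two hC hC1⟩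

lemma exists_isAdmissible_nine_mul_sum_sq {x y z : ℤ} (hx : x % 3 = 1) (hy : y % 3 = 1)
    (hz : z % 3 = 1) (hxyz : ¬(x = 1 ∧ y = 1 ∧ z = 1)) :
    ∃ A B C : ℤ, 9 * (x ^ 2 + y ^ 2 + z ^ 2) = A ^ 2 + B ^ 2 + C ^ 2 ∧ IsAdmissible A B C := by
  by_contra hnone
  have has_neg_one : ∀ A B C : ℤ, 9 * (x ^ 2 + y ^ 2 + z ^ 2) = A ^ 2 + B ^ 2 + C ^ 2 →
      A % 3 = 2 → B % 3 = 2 → C % 3 = 2 → A = -1 ∨ B = -1 ∨ C = -1 := by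
    intro A B C hsum hA hB hC
    by_contra! hne
    exact hnone ⟨A, B, C, hsum, isAdmissible_of_emod_three_eq_two hA hB hC hne.1 hne.2.1 hne.2.2⟩
  have h₁ := has_neg_one (2 * x + 2 * y + z) (-x + 2 * y - 2 * z) (2 * x - y - 2 * z)
    (by ring) (by omega) (by omega) (by omega)
  have h₂ := has_neg_one (-2 * x + 2 * y - z) (x + 2 * y + 2 * z) (-2 * x - y + 2 * z)
    (by ring) (by omega) (by omega) (by omega)
  have h₃ := has_neg_one (2 * x - 2 * y - z) (-x - 2 * y + 2 * z) (2 * x + y + 2 * z)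
    (by ring) (by omega) (by omega) (by omega)
  omega

theorem stmt_14_general (m : ℕ) (hm3 : m ≠ 3) (a b c : ℤ)
    (habc : (m : ℤ) = a ^ 2 + b ^ 2 + c ^ 2) (h3 : ¬((3 : ℤ) ∣ a * b * c)) :
    ∃ A B C : ℤ, (9 * m : ℤ) = A ^ 2 + B ^ 2 + C ^ 2 ∧ ¬((3 : ℤ) ∣ A * B * C) ∧
      A ^ 2 ≠ 1 ∧ B ^ 2 ≠ 1 ∧ C ^ 2 ≠ 1 := by
  obtain ⟨x, hxa, hx⟩ := Int.exists_sq_eq_sq_and_emod_three_eq_one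
    fun h : (3 : ℤ) ∣ a => h3 ((h.mul_right b).mul_right c)
  obtain ⟨y, hyb, hy⟩ := Int.exists_sq_eq_sq_and_emod_three_eq_one
    fun h : (3 : ℤ) ∣ b => h3 ((h.mul_left a).mul_right c)
  obtain ⟨z, hzc, hz⟩ := Int.exists_sq_eq_sq_and_emod_three_eq_one
    fun h : (3 : ℤ) ∣ c => h3 (h.mul_left (a * b))
  have hm : (m : ℤ) = x ^ 2 + y ^ 2 + z ^ 2 := by rw [hxa, hyb, hzc, habc]
  have hxyz : ¬(x = 1 ∧ y = 1 ∧ z = 1) := by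
    rintro ⟨rfl, rfl, rfl⟩
    exact hm3 (by exact_mod_cast hm)
  obtain ⟨A, B, C, hsum, hadm⟩ := exists_isAdmissible_nine_mul_sum_sq hx hy hz hxyz
  exact ⟨A, B, C, hm ▸ hsum, hadm⟩

/-- If `m ≠ 3` is a positive integer with `m = a² + b² + c²` and `3 ∤ abc`, then
`9m = A² + B² + C²` for integers with `3 ∤ ABC` and `A², B², C² ≠ 1`. -/
theorem stmt_14 (m : ℕ) (hm : 0 < m) (hm3 : m ≠ 3) (a b c : ℤ)
    (habc : (m : ℤ) = a ^ 2 + b ^ 2 + c ^ 2) (h3 : ¬((3 : ℤ) ∣ a * b * c)) :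
    ∃ A B C : ℤ, (9 * m : ℤ) = A ^ 2 + B ^ 2 + C ^ 2 ∧ ¬((3 : ℤ) ∣ A * B * C) ∧
      A ^ 2 ≠ 1 ∧ B ^ 2 ≠ 1 ∧ C ^ 2 ≠ 1 :=
  stmt_14_general m hm3 a b c habc h3
end

section
/- For every integer k ≥ 4 and every positive integer n, n is a sum of k nonzero triangular numbers if and only if n ≥ k and n ≠ k + 1 and n ≠ k + 3. Equivalently: there exist positive integers x₁, …, x_k with n = Σᵢ xᵢ(xᵢ+1)/2 if and only if n ∉ {1, 2, …, k−1, k+1, k+3}. -/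
/-!
By Lagrange, `2n + 1 = A² + B² + C² + D²`. The Hadamard transform turns this into
`8n + 4 = Σ (A ± B ± C ± D)²`, a sum of four odd squares `(2a + 1)²`, i.e. `n = Σ a(a+1)/2`;
a summand vanishes only when the corresponding sum `A ± B ± C ± D` is `±1`. After changing
signs that sum is `A + B + C + D = 1`, and then `n = Σ A(A-1)/2` directly, unless some
coordinate is `0` or `1`. What remains are the triples with `x + y + z = 0`,
`x² + y² + z² = 2n` and with `x + y + z = 1`, `x² + y² + z² = 2n + 1`; for these, explicit
representations, linear in `⌊x/3⌋, ⌊y/3⌋` and chosen by the residues mod 3, cover every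
`n ≥ 8` except `12, 17, 21`, which are written down directly.

Adding summands `1` passes from `k` to `k + 1`. Conversely a positive triangular number is
`1`, `3` or at least `6`, so a sum of `k` of them is never `k + 1` or `k + 3`.
-/

def IsSumPosTri (k n : ℕ) : Prop :=
  ∃ x : Fin k → ℕ, (∀ i, 0 < x i) ∧ n = ∑ i, x i * (x i + 1) / 2

/-- Triangular numbers are parametrized as `a(a+1)/2` with `a : ℤ`; `a` and `-1 - a` give the
same number, and it is `0` exactly for `a ∈ {-1, 0}`. -/
def IsSumFourIntTri (n : ℕ) : Prop :=
  ∃ a b c d : ℤ, a * (a + 1) + b * (b + 1) + c * (c + 1) + d * (d + 1) = 2 * n ∧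
    (a < -1 ∨ 0 < a) ∧ (b < -1 ∨ 0 < b) ∧ (c < -1 ∨ 0 < c) ∧ (d < -1 ∨ 0 < d)

section

variable {k n : ℕ}

theorem degenerate_of_not_isSumFourIntTri (hn : ¬ IsSumFourIntTri n) (a b c d : ℤ)
    (h : a * (a + 1) + b * (b + 1) + c * (c + 1) + d * (d + 1) = 2 * n) :
    ¬ ((a < -1 ∨ 0 < a) ∧ (b < -1 ∨ 0 < b) ∧ (c < -1 ∨ 0 < c) ∧ (d < -1 ∨ 0 < d)) :=
  fun hnd => hn ⟨a, b, c, d, h, hnd⟩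

theorem triangle_eq_one_or_eq_three_or_six_le {m : ℕ} (hm : 0 < m) :
    m * (m + 1) / 2 = 1 ∨ m * (m + 1) / 2 = 3 ∨ 6 ≤ m * (m + 1) / 2 := by
  rcases (by omega : m = 1 ∨ m = 2 ∨ 3 ≤ m) with rfl | rfl | hm
  · simp
  · simp
  · have := Nat.mul_le_mul hm (by omega : 4 ≤ m + 1)
    omega

theorem IsSumPosTri.le_and_ne :
    ∀ {k n : ℕ}, IsSumPosTri k n → k ≤ n ∧ n ≠ k + 1 ∧ n ≠ k + 3
  | 0, n, ⟨x, _, h⟩ => by simp at h; omega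
  | k + 1, n, ⟨x, hx, h⟩ => by
    rw [Fin.sum_univ_succ] at h
    have ih := IsSumPosTri.le_and_ne ⟨fun i => x i.succ, fun i => hx i.succ, rfl⟩
    dsimp only at ih
    have := triangle_eq_one_or_eq_three_or_six_le (hx 0)
    omega

theorem IsSumPosTri.succ (h : IsSumPosTri k n) : IsSumPosTri (k + 1) (n + 1) := by
  obtain ⟨x, hx, rfl⟩ := h
  refine ⟨Fin.cons 1 x, fun i => Fin.cases Nat.one_pos hx i, ?_⟩
  rw [Fin.sum_univ_succ]
  simp only [Fin.cons_zero, Fin.cons_succ]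
  omega

theorem exists_pos_mul_succ_eq (a : ℤ) (ha : a < -1 ∨ 0 < a) :
    ∃ m : ℕ, 0 < m ∧ (m : ℤ) * (m + 1) = a * (a + 1) := by
  rcases ha with ha | ha
  · exact ⟨(-1 - a).toNat, by omega, by rw [Int.toNat_of_nonneg (by omega)]; ring⟩
  · exact ⟨a.toNat, by omega, by rw [Int.toNat_of_nonneg ha.le]⟩

theorem IsSumFourIntTri.isSumPosTri (h : IsSumFourIntTri n) : IsSumPosTri 4 n := by
  obtain ⟨a, b, c, d, h, ha, hb, hc, hd⟩ := h
  obtain ⟨m₁, hm₁, e₁⟩ := exists_pos_mul_succ_eq a ha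
  obtain ⟨m₂, hm₂, e₂⟩ := exists_pos_mul_succ_eq b hb
  obtain ⟨m₃, hm₃, e₃⟩ := exists_pos_mul_succ_eq c hc
  obtain ⟨m₄, hm₄, e₄⟩ := exists_pos_mul_succ_eq d hd
  have hsum : m₁ * (m₁ + 1) + m₂ * (m₂ + 1) + m₃ * (m₃ + 1) + m₄ * (m₄ + 1) = 2 * n := by
    zify
    linear_combination e₁ + e₂ + e₃ + e₄ + h
  have two_dvd (m : ℕ) : 2 ∣ m * (m + 1) := (Nat.even_mul_succ_self m).two_dvd
  refine ⟨![m₁, m₂, m₃, m₄], fun i => by fin_cases i <;> assumption, ?_⟩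
  simp only [Fin.sum_univ_four, Matrix.cons_val]
  have := two_dvd m₁; have := two_dvd m₂; have := two_dvd m₃; have := two_dvd m₄
  omega

theorem isSumFourIntTri_of_loeschian (p q : ℤ) (hp : 0 ≤ p) (hq : 0 ≤ q) (h8 : 8 ≤ n)
    (h : p ^ 2 + q ^ 2 + (p + q) ^ 2 = 2 * n) : IsSumFourIntTri n := by
  wlog hqp : q ≤ p generalizing p q
  · exact this q p hq hp (by linear_combination h) (by linarith)
  obtain hp3 | hp3 := lt_or_ge p 3
  · obtain ⟨rfl, rfl⟩ : p = 2 ∧ q = 2 := by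
      interval_cases p <;> interval_cases q <;> omega
    exact ⟨2, 2, 2, 2, by linear_combination h, by norm_num⟩
  obtain ⟨u, rfl | rfl | rfl⟩ : ∃ u, p = 3 * u ∨ p = 3 * u + 1 ∨ p = 3 * u + 2 :=
    ⟨p / 3, by omega⟩
  · exact ⟨3 * u, 2 * u + q - 1, 2 * u - 1, u + q, by linear_combination h, by omega⟩
  · exact ⟨3 * u, 2 * u + q, 2 * u + 1, u + q, by linear_combination h, by omega⟩
  · exact ⟨3 * u + 2, 2 * u + q + 1, 2 * u, u + q, by linear_combination h, by omega⟩

theorem isSumFourIntTri_of_triple_sum_zero (x y z : ℤ) (h8 : 8 ≤ n) (hs : x + y + z = 0)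
    (h : x ^ 2 + y ^ 2 + z ^ 2 = 2 * n) : IsSumFourIntTri n := by
  rcases le_total 0 x with hx | hx <;> rcases le_total 0 y with hy | hy <;>
    rcases le_total 0 z with hz | hz <;>
    first
    | exact isSumFourIntTri_of_loeschian x y hx hy h8 (by linear_combination h + (x + y - z) * hs)
    | exact isSumFourIntTri_of_loeschian x z hx hz h8 (by linear_combination h + (x + z - y) * hs)
    | exact isSumFourIntTri_of_loeschian y z hy hz h8 (by linear_combination h + (y + z - x) * hs)
    | exact isSumFourIntTri_of_loeschian (-x) (-y) (by linarith) (by linarith) h8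
        (by linear_combination h + (x + y - z) * hs)
    | exact isSumFourIntTri_of_loeschian (-x) (-z) (by linarith) (by linarith) h8
        (by linear_combination h + (x + z - y) * hs)
    | exact isSumFourIntTri_of_loeschian (-y) (-z) (by linarith) (by linarith) h8
        (by linear_combination h + (y + z - x) * hs)

theorem isSumFourIntTri_of_triple_sum_one_of_emod_one (x y z : ℤ) (h8 : 8 ≤ n)
    (hs : x + y + z = 1) (h : x ^ 2 + y ^ 2 + z ^ 2 = 2 * n + 1) (hx : x % 3 = 1)
    (hy : y % 3 = 1) : IsSumFourIntTri n := by
  obtain ⟨u, rfl⟩ : ∃ u, x = 3 * u + 1 := ⟨x / 3, by omega⟩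
  obtain ⟨v, rfl⟩ : ∃ v, y = 3 * v + 1 := ⟨y / 3, by omega⟩
  obtain rfl : z = -3 * u - 3 * v - 1 := by linarith
  by_contra hn
  have h₁ := degenerate_of_not_isSumFourIntTri hn
    (u + 3 * v) (2 * u + 3 * v + 1) (3 * u) (2 * u) (by linear_combination h)
  have h₂ := degenerate_of_not_isSumFourIntTri hn
    (3 * u + v) (3 * u + 2 * v + 1) (3 * v) (2 * v) (by linear_combination h)
  obtain ⟨rfl, rfl⟩ | ⟨rfl, rfl⟩ | ⟨rfl, rfl⟩ :
      (u = 0 ∧ v = 0) ∨ (u = 0 ∧ v = -1) ∨ (u = -1 ∧ v = 0) := by omega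
  all_goals norm_num at h; omega

theorem isSumFourIntTri_of_triple_sum_one_of_emod_two (x y z : ℤ) (h8 : 8 ≤ n)
    (hs : x + y + z = 1) (h : x ^ 2 + y ^ 2 + z ^ 2 = 2 * n + 1) (hx : x % 3 = 2)
    (hy : y % 3 = 2) : IsSumFourIntTri n := by
  obtain ⟨u, rfl⟩ : ∃ u, x = 3 * u + 2 := ⟨x / 3, by omega⟩
  obtain ⟨v, rfl⟩ : ∃ v, y = 3 * v + 2 := ⟨y / 3, by omega⟩
  obtain rfl : z = -3 * u - 3 * v - 3 := by linarith
  by_contra hn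
  have h₁ := degenerate_of_not_isSumFourIntTri hn
    (3 * u + 2 * v + 2) (3 * u + v + 2) (3 * v + 1) (2 * v + 1) (by linear_combination h)
  have h₂ := degenerate_of_not_isSumFourIntTri hn
    (2 * u + 3 * v + 2) (u + 3 * v + 2) (3 * u + 1) (2 * u + 1) (by linear_combination h)
  obtain ⟨rfl, rfl⟩ | ⟨rfl, rfl⟩ | ⟨rfl, rfl⟩ | ⟨rfl, rfl⟩ | ⟨rfl, rfl⟩ :
      (u = -1 ∧ v = -1) ∨ (u = -1 ∧ v = 0) ∨ (u = 0 ∧ v = -1) ∨ (u = -1 ∧ v = 1) ∨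
        (u = 1 ∧ v = -1) := by omega
  all_goals norm_num at h
  all_goals first | omega | exact hn ⟨4, 2, 2, 1, by omega, by norm_num⟩

theorem isSumFourIntTri_of_triple_sum_one_of_dvd (x y z : ℤ) (h8 : 8 ≤ n)
    (hs : x + y + z = 1) (h : x ^ 2 + y ^ 2 + z ^ 2 = 2 * n + 1) (hx : 3 ∣ x) (hy : 3 ∣ y) :
    IsSumFourIntTri n := by
  obtain ⟨u, rfl⟩ := hx
  obtain ⟨v, rfl⟩ := hy
  obtain rfl : z = 1 - 3 * u - 3 * v := by linarith
  by_contra hn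
  have h₁ := degenerate_of_not_isSumFourIntTri hn
    (4 * u + 2 * v - 1) (u + 2 * v - 1) (v - u) (3 * v - 1) (by linear_combination h)
  have h₂ := degenerate_of_not_isSumFourIntTri hn
    (2 * u + 4 * v - 1) (2 * u + v - 1) (u - v) (3 * u - 1) (by linear_combination h)
  have h₃ := degenerate_of_not_isSumFourIntTri hn
    (3 * u + 3 * v - 1) (2 * u + 2 * v - 1) (2 * u - v - 1) (u - 2 * v) (by linear_combination h)
  obtain ⟨rfl, rfl⟩ | ⟨rfl, rfl⟩ | ⟨rfl, rfl⟩ | ⟨rfl, rfl⟩ :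
      (u = 0 ∧ v = 0) ∨ (u = -1 ∧ v = 0) ∨ (u = 0 ∧ v = -1) ∨ (u = 1 ∧ v = 1) := by
    omega
  all_goals norm_num at h
  all_goals first
    | omega
    | exact hn ⟨2, 2, 2, 2, by omega, by norm_num⟩
    | exact hn ⟨3, 3, 3, 2, by omega, by norm_num⟩

theorem isSumFourIntTri_of_triple_sum_one (x y z : ℤ) (h8 : 8 ≤ n) (hs : x + y + z = 1)
    (h : x ^ 2 + y ^ 2 + z ^ 2 = 2 * n + 1) : IsSumFourIntTri n := by
  -- up to order, the residues of `x, y, z` mod 3 are `(1, 1, 2)`, `(2, 2, 0)` or `(0, 0, 1)`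
  rcases (by omega : x % 3 = 0 ∨ x % 3 = 1 ∨ x % 3 = 2) with hx | hx | hx <;>
    rcases (by omega : y % 3 = 0 ∨ y % 3 = 1 ∨ y % 3 = 2) with hy | hy | hy <;>
    first
    | exact isSumFourIntTri_of_triple_sum_one_of_emod_one x y z h8 hs h (by omega) (by omega)
    | exact isSumFourIntTri_of_triple_sum_one_of_emod_one x z y h8 (by linarith)
        (by linear_combination h) (by omega) (by omega)
    | exact isSumFourIntTri_of_triple_sum_one_of_emod_one y z x h8 (by linarith)
        (by linear_combination h) (by omega) (by omega)
    | exact isSumFourIntTri_of_triple_sum_one_of_emod_two x y z h8 hs h (by omega) (by omega)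
    | exact isSumFourIntTri_of_triple_sum_one_of_emod_two x z y h8 (by linarith)
        (by linear_combination h) (by omega) (by omega)
    | exact isSumFourIntTri_of_triple_sum_one_of_emod_two y z x h8 (by linarith)
        (by linear_combination h) (by omega) (by omega)
    | exact isSumFourIntTri_of_triple_sum_one_of_dvd x y z h8 hs h (by omega) (by omega)
    | exact isSumFourIntTri_of_triple_sum_one_of_dvd x z y h8 (by linarith)
        (by linear_combination h) (by omega) (by omega)
    | exact isSumFourIntTri_of_triple_sum_one_of_dvd y z x h8 (by linarith)
        (by linear_combination h) (by omega) (by omega)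

theorem isSumFourIntTri_of_quad_sum_one (A B C D : ℤ) (h8 : 8 ≤ n) (hs : A + B + C + D = 1)
    (h : A ^ 2 + B ^ 2 + C ^ 2 + D ^ 2 = 2 * n + 1) : IsSumFourIntTri n := by
  by_contra hn
  have hdeg := degenerate_of_not_isSumFourIntTri hn
    (A - 1) (B - 1) (C - 1) (D - 1) (by linear_combination h - hs)
  apply hn
  rcases (by omega :
      (A = 0 ∨ A = 1) ∨ (B = 0 ∨ B = 1) ∨ (C = 0 ∨ C = 1) ∨ (D = 0 ∨ D = 1))
    with (rfl | rfl) | (rfl | rfl) | (rfl | rfl) | (rfl | rfl)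
  · exact isSumFourIntTri_of_triple_sum_one B C D h8 (by linarith) (by linear_combination h)
  · exact isSumFourIntTri_of_triple_sum_zero B C D h8 (by linarith) (by linear_combination h)
  · exact isSumFourIntTri_of_triple_sum_one A C D h8 (by linarith) (by linear_combination h)
  · exact isSumFourIntTri_of_triple_sum_zero A C D h8 (by linarith) (by linear_combination h)
  · exact isSumFourIntTri_of_triple_sum_one A B D h8 (by linarith) (by linear_combination h)
  · exact isSumFourIntTri_of_triple_sum_zero A B D h8 (by linarith) (by linear_combination h)
  · exact isSumFourIntTri_of_triple_sum_one A B C h8 (by linarith) (by linear_combination h)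
  · exact isSumFourIntTri_of_triple_sum_zero A B C h8 (by linarith) (by linear_combination h)

theorem isSumFourIntTri_of_sum_four_sq (A B C D : ℤ) (h8 : 8 ≤ n)
    (h : A ^ 2 + B ^ 2 + C ^ 2 + D ^ 2 = 2 * n + 1) : IsSumFourIntTri n := by
  obtain ⟨w, hw⟩ : Odd (A + B + C + D) := by
    have : Odd (A ^ 2 + B ^ 2 + C ^ 2 + D ^ 2) := ⟨n, h⟩
    simpa [parity_simps] using this
  by_contra hn
  -- `2 * (w, w - C - D, w - B - D, w - B - C) + 1` is the Hadamard transform of `(A, B, C, D)`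
  have hdeg := degenerate_of_not_isSumFourIntTri hn w (w - C - D) (w - B - D) (w - B - C)
    (by obtain rfl : A = 2 * w + 1 - B - C - D := by linarith
        linear_combination h)
  apply hn
  rcases (by omega : A + B + C + D = 1 ∨ A + B + C + D = -1 ∨ A + B - C - D = 1 ∨
      A + B - C - D = -1 ∨ A - B + C - D = 1 ∨ A - B + C - D = -1 ∨ A - B - C + D = 1 ∨
      A - B - C + D = -1) with hs | hs | hs | hs | hs | hs | hs | hs
  · exact isSumFourIntTri_of_quad_sum_one A B C D h8 hs h
  · exact isSumFourIntTri_of_quad_sum_one (-A) (-B) (-C) (-D) h8 (by linarith)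
      (by linear_combination h)
  · exact isSumFourIntTri_of_quad_sum_one A B (-C) (-D) h8 (by linarith) (by linear_combination h)
  · exact isSumFourIntTri_of_quad_sum_one (-A) (-B) C D h8 (by linarith) (by linear_combination h)
  · exact isSumFourIntTri_of_quad_sum_one A (-B) C (-D) h8 (by linarith) (by linear_combination h)
  · exact isSumFourIntTri_of_quad_sum_one (-A) B (-C) D h8 (by linarith) (by linear_combination h)
  · exact isSumFourIntTri_of_quad_sum_one A (-B) (-C) D h8 (by linarith) (by linear_combination h)
  · exact isSumFourIntTri_of_quad_sum_one (-A) B C (-D) h8 (by linarith) (by linear_combination h)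

theorem isSumFourIntTri_of_eight_le (h8 : 8 ≤ n) : IsSumFourIntTri n := by
  obtain ⟨a, b, c, d, h⟩ := Nat.sum_four_squares (2 * n + 1)
  exact isSumFourIntTri_of_sum_four_sq a b c d h8 (by exact_mod_cast h)

theorem isSumPosTri_four (h4 : 4 ≤ n) (h5 : n ≠ 5) (h7 : n ≠ 7) : IsSumPosTri 4 n := by
  apply IsSumFourIntTri.isSumPosTri
  rcases (by omega : n = 4 ∨ n = 6 ∨ 8 ≤ n) with rfl | rfl | h8
  · exact ⟨1, 1, 1, 1, by norm_num, by norm_num⟩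
  · exact ⟨2, 1, 1, 1, by norm_num, by norm_num⟩
  · exact isSumFourIntTri_of_eight_le h8

theorem isSumPosTri_of_le_of_ne (hk : 4 ≤ k) (hkn : k ≤ n) (h1 : n ≠ k + 1)
    (h3 : n ≠ k + 3) :
    IsSumPosTri k n := by
  induction k, hk using Nat.le_induction generalizing n with
  | base => exact isSumPosTri_four hkn h1 h3
  | succ k _ ih =>
    obtain ⟨m, rfl⟩ : ∃ m, n = m + 1 := ⟨n - 1, by omega⟩
    exact (ih (by omega) (by omega) (by omega)).succ

end

theorem stmt_16_general (k : ℕ) (hk : 4 ≤ k) (n : ℕ) :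
    (∃ x : Fin k → ℕ, (∀ i, 0 < x i) ∧ n = ∑ i, x i * (x i + 1) / 2) ↔
    (k ≤ n ∧ n ≠ k + 1 ∧ n ≠ k + 3) :=
  ⟨IsSumPosTri.le_and_ne, fun ⟨hkn, h1, h3⟩ => isSumPosTri_of_le_of_ne hk hkn h1 h3⟩

/-- For `k ≥ 4`, a positive integer `n` is a sum of `k` nonzero triangular numbers iff
`n ≥ k`, `n ≠ k + 1`, and `n ≠ k + 3`. -/
theorem stmt_16 (k : ℕ) (hk : 4 ≤ k) (n : ℕ) (hn : 0 < n) :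
    (∃ x : Fin k → ℕ, (∀ i, 0 < x i) ∧ n = ∑ i, x i * (x i + 1) / 2) ↔
    (k ≤ n ∧ n ≠ k + 1 ∧ n ≠ k + 3) :=
  stmt_16_general k hk n
end
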